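/- (Duality of generalized nef partitions) Let $\Pi(\Delta) = \{\Delta_1, \dots, \Delta_s\}$ be a generalized nef partition of $\Delta$ and define $\nabla_j = \{ n : \langle m, n \rangle \geq -\delta_{i,j}\ \forall m \in \Delta_i, \forall i\}$ and $\nabla = \nabla_1 + \cdots + \nabla_s$. Then $\Pi(\nabla) = \{\nabla_1, \dots, \nabla_s\}$ is a generalized nef partition of $\nabla$, and moreover $\Delta_i = \{ m \in M_{\mathbb{R}} : \langle m, n \rangle \geq -\delta_{i,j} \text{ for all } n \in \nabla_j,\ j = 1, \dots, s\}$ for each $i$; in particular the duality is an involution. -/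

import Mathlib

open scoped RealInnerProductSpace Pointwise

namespace GNPPaper

variable {d s : ℕ}

abbrev E (d : ℕ) := EuclideanSpace ℝ (Fin d)

/-- Polar with the paper's sign convention `⟨x,y⟩ ≥ -1`. -/
def pol (A : Set (E d)) : Set (E d) := {y | ∀ x ∈ A, (-1 : ℝ) ≤ (inner ℝ x y : ℝ)}

/-- Vertices = extreme points. -/
def Vert (A : Set (E d)) : Set (E d) := Set.extremePoints ℝ A

/-- Indicator function of a set. -/
noncomputable def ind (I : Set (E d)) (v : E d) : ℝ := I.indicator (fun _ => 1) v

/-- The piece `Δ_i` associated to a part `I` of the vertices of the polar of `A`. -/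
def pieceD (A : Set (E d)) (I : Set (E d)) : Set (E d) :=
  {m | ∀ v ∈ Vert (pol A), -(ind I v) ≤ (inner ℝ m v : ℝ)}

def IsPolytope (A : Set (E d)) : Prop :=
  ∃ F : Finset (E d), A = convexHull ℝ (F : Set (E d))

def IsVertPartition (A : Set (E d)) (I : Fin s → Set (E d)) : Prop :=
  (∀ i, I i ⊆ Vert (pol A)) ∧ ∀ v ∈ Vert (pol A), ∃! i, v ∈ I i

/-- `I` induces a generalized nef partition of `A`. -/
def IsGNP (A : Set (E d)) (I : Fin s → Set (E d)) : Prop :=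
  IsPolytope A ∧ (0 : E d) ∈ interior A ∧ IsVertPartition A I ∧
    (∑ i, pieceD A (I i)) = A

/-- The dual piece `∇_j`. -/
def pieceN (A : Set (E d)) (I : Fin s → Set (E d)) (j : Fin s) : Set (E d) :=
  {y | ∀ i : Fin s, ∀ m ∈ pieceD A (I i), -(if i = j then (1:ℝ) else 0) ≤ (inner ℝ m y : ℝ)}

def nab (A : Set (E d)) (I : Fin s → Set (E d)) : Set (E d) := ∑ j, pieceN A I j

/-- A facet: a nonempty proper face of codimension one. -/
def IsFacet (A F : Set (E d)) : Prop :=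
  IsExtreme ℝ A F ∧ F.Nonempty ∧ F ≠ A ∧
    Module.finrank ℝ ↥(vectorSpan ℝ F) + 1 = d

/-- Cone of nonnegative real combinations of elements of `S`. -/
def coneOf (S : Set (E d)) : Set (E d) :=
  {x | ∃ (t : Finset (E d)) (c : E d → ℝ), (t : Set (E d)) ⊆ S ∧ (∀ v, 0 ≤ c v) ∧
      x = ∑ v ∈ t, c v • v}

def IsLatticeSet (S : Set (E d)) : Prop := ∀ v ∈ S, ∀ k : Fin d, ∃ z : ℤ, v k = (z : ℝ)

/-- A full-dimensional simplex. -/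
def IsSimplex (S : Set (E d)) : Prop :=
  ∃ F : Finset (E d), S = convexHull ℝ (F : Set (E d)) ∧ F.card = d + 1 ∧
    AffineIndependent ℝ (fun v : F => (v : E d))

/-- Good pair of generalized nef partitions. -/
def IsGoodPair (A1 A2 : Set (E d)) (I1 I2 : Fin s → Set (E d)) : Prop :=
  IsGNP A1 I1 ∧ IsGNP A2 I2 ∧
  (∀ i, pieceD A1 (I1 i) ⊆ pieceD A2 (I2 i)) ∧
  (∀ i, IsLatticeSet (Vert (pieceD A1 (I1 i)))) ∧
  IsLatticeSet (Vert A1) ∧ IsLatticeSet (Vert (pol A2)) ∧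
  (0 : E d) ∈ interior A1 ∧ (0 : E d) ∈ interior (pol A2)


section helpers

lemma ind_of_mem {I : Set (E d)} {v : E d} (h : v ∈ I) : ind I v = 1 :=
  Set.indicator_of_mem h _

lemma ind_of_not_mem {I : Set (E d)} {v : E d} (h : v ∉ I) : ind I v = 0 :=
  Set.indicator_of_notMem h _

lemma ind_nonneg (I : Set (E d)) (v : E d) : 0 ≤ ind I v := by
  by_cases h : v ∈ I
  · rw [ind_of_mem h]; norm_num
  · rw [ind_of_not_mem h]

lemma ind_le_one (I : Set (E d)) (v : E d) : ind I v ≤ 1 := by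
  by_cases h : v ∈ I
  · rw [ind_of_mem h]
  · rw [ind_of_not_mem h]; norm_num

lemma convex_halfspaceD (y : E d) (c : ℝ) : Convex ℝ {x : E d | c ≤ (inner ℝ x y : ℝ)} :=
  convex_halfSpace_ge ⟨fun a b => inner_add_left a b y, fun r a => real_inner_smul_left a y r⟩ c

lemma hull_le_inner {S : Set (E d)} {y : E d} {c : ℝ} (h : ∀ x ∈ S, c ≤ (inner ℝ x y : ℝ)) :
    ∀ x ∈ convexHull ℝ S, c ≤ (inner ℝ x y : ℝ) :=
  fun _ hx => convexHull_min h (convex_halfspaceD y c) hx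

lemma pol_convexHull (S : Set (E d)) : pol (convexHull ℝ S) = pol S := by
  ext y
  constructor
  · intro h x hx; exact h x (subset_convexHull ℝ S hx)
  · intro h x hx; exact hull_le_inner h x hx

lemma isClosed_pol (S : Set (E d)) : IsClosed (pol S) := by
  have : pol S = ⋂ x ∈ S, {y : E d | (-1:ℝ) ≤ (inner ℝ x y : ℝ)} := by
    ext y; simp [pol, Set.mem_iInter]
  rw [this]
  exact isClosed_biInter fun x _ =>
    isClosed_le continuous_const (Continuous.inner continuous_const continuous_id)

lemma convex_pol (S : Set (E d)) : Convex ℝ (pol S) := by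
  have : pol S = ⋂ x ∈ S, {y : E d | (-1:ℝ) ≤ (inner ℝ x y : ℝ)} := by
    ext y; simp [pol, Set.mem_iInter]
  rw [this]
  exact convex_iInter fun x => convex_iInter fun _ =>
    convex_halfSpace_ge ⟨fun a b => inner_add_right x a b, fun r a => real_inner_smul_right x a r⟩ _

lemma zero_mem_pol (S : Set (E d)) : (0 : E d) ∈ pol S := by
  intro x _
  rw [inner_zero_right]
  norm_num


lemma unit_smul_facts {m : E d} (hm : m ≠ 0) {r : ℝ} (hr : 0 < r) :
    ((r / 2) • ‖m‖⁻¹ • m ∈ Metric.ball (0 : E d) r) ∧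
      (inner ℝ ((r / 2) • ‖m‖⁻¹ • m) m : ℝ) = (r / 2) * ‖m‖ := by
  have hn : 0 < ‖m‖ := norm_pos_iff.mpr hm
  constructor
  · rw [Metric.mem_ball, dist_zero_right, norm_smul, norm_smul, norm_inv, norm_norm,
      Real.norm_eq_abs, abs_of_pos (by positivity : (0:ℝ) < r / 2),
      inv_mul_cancel₀ (ne_of_gt hn), mul_one]
    linarith
  · rw [real_inner_smul_left, real_inner_smul_left, real_inner_self_eq_norm_mul_norm]
    field_simp

/-- An extreme point of an H-polyhedron is uniquely determined by its tight constraints. -/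
lemma eq_of_tight (F : Finset (E d)) (r : E d → ℝ)
    {y : E d} (hy : y ∈ Set.extremePoints ℝ {w : E d | ∀ c ∈ F, r c ≤ (inner ℝ w c : ℝ)})
    {z : E d} (hz : ∀ c ∈ F, (inner ℝ y c : ℝ) = r c → (inner ℝ z c : ℝ) = r c) : z = y := by
  classical
  by_contra hne
  obtain ⟨hyK, hext⟩ := hy
  set u := z - y with hu
  have hu0 : u ≠ 0 := sub_ne_zero.mpr hne
  have htight : ∀ c ∈ F, (inner ℝ y c : ℝ) = r c → (inner ℝ u c : ℝ) = 0 := by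
    intro c hc h
    have hz' := hz c hc h
    rw [hu, inner_sub_left, hz', h, sub_self]
  set G := F.filter (fun c => (inner ℝ y c : ℝ) ≠ r c) with hG
  set ε : ℝ := if hGn : G.Nonempty then
      min 1 (G.inf' hGn fun c => ((inner ℝ y c : ℝ) - r c) / (|(inner ℝ u c : ℝ)| + 1)) else 1 with hε
  have hεpos : 0 < ε := by
    by_cases hGn : G.Nonempty
    · rw [hε, dif_pos hGn]
      refine lt_min one_pos ?_
      rw [Finset.lt_inf'_iff]
      intro c hc
      have hcF : c ∈ F := (Finset.mem_filter.mp hc).1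
      have hne' : (inner ℝ y c : ℝ) ≠ r c := (Finset.mem_filter.mp hc).2
      have hle : r c ≤ (inner ℝ y c : ℝ) := hyK c hcF
      have hlt : 0 < (inner ℝ y c : ℝ) - r c := sub_pos.mpr (lt_of_le_of_ne hle (Ne.symm hne'))
      positivity
    · rw [hε, dif_neg hGn]; norm_num
  have hbound : ∀ c ∈ F, (inner ℝ u c : ℝ) = 0 ∨ ε * |(inner ℝ u c : ℝ)| ≤ (inner ℝ y c : ℝ) - r c := by
    intro c hc
    by_cases ht : (inner ℝ y c : ℝ) = r c
    · exact Or.inl (htight c hc ht)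
    · right
      have hcG : c ∈ G := Finset.mem_filter.mpr ⟨hc, ht⟩
      have hGn : G.Nonempty := ⟨c, hcG⟩
      have hε1 : ε ≤ ((inner ℝ y c : ℝ) - r c) / (|(inner ℝ u c : ℝ)| + 1) := by
        rw [hε, dif_pos hGn]
        exact (min_le_right _ _).trans (Finset.inf'_le _ hcG)
      have habs : (0:ℝ) < |(inner ℝ u c : ℝ)| + 1 := by positivity
      have h2 : ε * (|(inner ℝ u c : ℝ)| + 1) ≤ (inner ℝ y c : ℝ) - r c := (le_div_iff₀ habs).mp hε1
      nlinarith [abs_nonneg (inner ℝ u c : ℝ), hεpos.le]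
  have hmem : ∀ σ : ℝ, |σ| ≤ ε → (y + σ • u) ∈ {w : E d | ∀ c ∈ F, r c ≤ (inner ℝ w c : ℝ)} := by
    intro σ hσ c hc
    have h1 : r c ≤ (inner ℝ y c : ℝ) := hyK c hc
    have hval : (inner ℝ (y + σ • u) c : ℝ) = (inner ℝ y c : ℝ) + σ * (inner ℝ u c : ℝ) := by
      rw [inner_add_left, real_inner_smul_left]
    rw [Set.mem_setOf_eq] at *
    rw [hval]
    rcases hbound c hc with h | h
    · rw [h, mul_zero, add_zero]; exact h1
    · have habs : |σ * (inner ℝ u c : ℝ)| ≤ ε * |(inner ℝ u c : ℝ)| := by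
        rw [abs_mul]
        exact mul_le_mul_of_nonneg_right hσ (abs_nonneg _)
      have := neg_abs_le (σ * (inner ℝ u c : ℝ))
      linarith
  have h1 : y + ε • u ∈ _ := hmem ε (by rw [abs_of_pos hεpos])
  have h2 : y + (-ε) • u ∈ _ := hmem (-ε) (by rw [abs_neg, abs_of_pos hεpos])
  have hyseg : y ∈ openSegment ℝ (y + (-ε) • u) (y + ε • u) := by
    refine ⟨1/2, 1/2, by norm_num, by norm_num, by norm_num, ?_⟩
    module
  have hres := hext h2 h1 hyseg
  have : ε • u = 0 := by
    have := congrArg (fun w => w - y) hres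
    simpa using this
  rcases smul_eq_zero.mp this with h | h
  · exact absurd h (ne_of_gt hεpos)
  · exact hu0 h

/-- An H-polyhedron has finitely many extreme points. -/
lemma finite_extremePoints (F : Finset (E d)) (r : E d → ℝ) :
    (Set.extremePoints ℝ {w : E d | ∀ c ∈ F, r c ≤ (inner ℝ w c : ℝ)}).Finite := by
  classical
  set K := {w : E d | ∀ c ∈ F, r c ≤ (inner ℝ w c : ℝ)} with hK
  set T : E d → Finset (E d) := fun y => F.filter (fun c => (inner ℝ y c : ℝ) = r c) with hT
  have hinj : Set.InjOn T (Set.extremePoints ℝ K) := by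
    intro y1 h1 y2 h2 heq
    refine (eq_of_tight F r h1 ?_).symm
    intro c hc hyc
    have hc1 : c ∈ T y2 := by rw [← heq, hT]; exact Finset.mem_filter.mpr ⟨hc, hyc⟩
    exact (Finset.mem_filter.mp hc1).2
  refine Set.Finite.of_finite_image ?_ hinj
  refine Set.Finite.subset (F.powerset.finite_toSet) ?_
  rintro t ⟨y, _, rfl⟩
  simp only [Finset.coe_powerset, Set.mem_preimage, Set.mem_powerset_iff, Finset.coe_subset]
  exact Finset.filter_subset _ _

/-- Minkowski: a compact convex set with finitely many extreme points is their hull. -/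
lemma eq_convexHull_extremePoints {K : Set (E d)} (hK : IsCompact K) (hconv : Convex ℝ K)
    (hfin : (Set.extremePoints ℝ K).Finite) :
    K = convexHull ℝ (Set.extremePoints ℝ K) := by
  have h1 := closure_convexHull_extremePoints hK hconv
  have h2 : IsClosed (convexHull ℝ (Set.extremePoints ℝ K)) :=
    hfin.isCompact_convexHull ℝ |>.isClosed
  rw [← h2.closure_eq]; exact h1.symm

lemma norm_le_of_mem_pol {S : Set (E d)} {ε : ℝ} (hε : 0 < ε)
    (h : Metric.ball (0 : E d) ε ⊆ S) {y : E d} (hy : y ∈ pol S) : ‖y‖ ≤ 2 / ε := by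
  rcases eq_or_ne y 0 with rfl | hy0
  · simp; positivity
  · have hny : (0:ℝ) < ‖y‖ := norm_pos_iff.mpr hy0
    set x : E d := -((ε / 2) • ‖y‖⁻¹ • y) with hx
    have hxball : x ∈ Metric.ball (0 : E d) ε := by
      rw [Metric.mem_ball, dist_zero_right, hx, norm_neg, norm_smul, norm_smul, norm_inv,
        norm_norm, Real.norm_eq_abs, abs_of_pos (by positivity : (0:ℝ) < ε / 2)]
      rw [inv_mul_cancel₀ (ne_of_gt hny), mul_one]
      linarith
    have := hy x (h hxball)
    rw [hx, inner_neg_left, real_inner_smul_left, real_inner_smul_left,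
      real_inner_self_eq_norm_sq] at this
    have heq : ‖y‖⁻¹ * ‖y‖ ^ 2 = ‖y‖ := by
      rw [sq]; field_simp
    rw [heq] at this
    rw [le_div_iff₀ hε]
    nlinarith
  
lemma ball_subset_pol {S : Set (E d)} {R : ℝ} (hR : 0 < R) (h : ∀ x ∈ S, ‖x‖ ≤ R) :
    Metric.ball (0 : E d) R⁻¹ ⊆ pol S := by
  intro y hy x hx
  have hyn : ‖y‖ < R⁻¹ := by rwa [Metric.mem_ball, dist_zero_right] at hy
  have h1 : |(inner ℝ x y : ℝ)| ≤ ‖x‖ * ‖y‖ := abs_real_inner_le_norm x y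
  have h2 : ‖x‖ * ‖y‖ ≤ R * R⁻¹ := by
    apply mul_le_mul (h x hx) hyn.le (norm_nonneg y) hR.le
  rw [mul_inv_cancel₀ (ne_of_gt hR)] at h2
  have := neg_abs_le (inner ℝ x y : ℝ)
  nlinarith [norm_nonneg x, norm_nonneg y, (h x hx), hyn]

/-- Bipolar theorem for the sign convention `⟨x,y⟩ ≥ -1`. -/
lemma pol_pol {C : Set (E d)} (hcl : IsClosed C) (hconv : Convex ℝ C) (h0 : (0:E d) ∈ C) :
    pol (pol C) = C := by
  apply Set.Subset.antisymm
  · intro z hz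
    by_contra hzC
    obtain ⟨f, u, ha, hu⟩ := geometric_hahn_banach_closed_point hconv hcl hzC
    have hu0 : 0 < u := by have := ha 0 h0; simpa using this
    set w := (InnerProductSpace.toDual ℝ (E d)).symm f with hw
    have hfw : ∀ x : E d, (inner ℝ x w : ℝ) = f x := fun x => by
      rw [real_inner_comm]; exact InnerProductSpace.toDual_symm_apply
    have hypol : -(u⁻¹ • w) ∈ pol C := by
      intro x hx
      rw [inner_neg_right, real_inner_smul_right]
      have h1 : (inner ℝ x w : ℝ) < u := by
        rw [hfw]; exact ha x hx
      have h2 : u⁻¹ * (inner ℝ x w : ℝ) < 1 := by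
        rw [← inv_mul_cancel₀ (ne_of_gt hu0)]
        exact mul_lt_mul_of_pos_left h1 (by positivity)
      linarith
    have := hz _ hypol
    have h5 : (inner ℝ w z : ℝ) = f z := by rw [real_inner_comm z w]; exact hfw z
    rw [inner_neg_left, real_inner_smul_left, h5] at this
    have h3 : u⁻¹ * f z > 1 := by
      rw [← inv_mul_cancel₀ (ne_of_gt hu0)]
      exact mul_lt_mul_of_pos_left hu (by positivity)
    linarith
  · intro x hx y hy
    have := hy x hx
    rwa [real_inner_comm]

end helpers

set_option maxHeartbeats 2000000 in
/-- duality of generalized nef partitions: the `∇_j` form a generalized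
nef partition of `∇`, and `Δ_i = {m | ⟨m,n⟩ ≥ -δ_{ij} ∀ n ∈ ∇_j, ∀ j}`; in particular
the duality is an involution. -/
theorem gnp_duality (A : Set (E d)) (I : Fin s → Set (E d)) (hGNP : IsGNP A I) :
    (∃ J : Fin s → Set (E d), IsGNP (nab A I) J ∧
      ∀ j : Fin s, pieceD (nab A I) (J j) = pieceN A I j) ∧
    (∀ i : Fin s, pieceD A (I i) =
      {m | ∀ j : Fin s, ∀ y ∈ pieceN A I j,
        -(if i = j then (1:ℝ) else 0) ≤ (inner ℝ y m : ℝ)}) := by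
  classical
  obtain ⟨hpoly, hint, ⟨hIsub, hIpart⟩, hsum⟩ := hGNP
  have huniq : ∀ v ∈ Vert (pol A), ∀ i j : Fin s, v ∈ I i → v ∈ I j → i = j :=
    fun v hv i j h1 h2 => (hIpart v hv).unique h1 h2
  -- (★): each part of the partition is contained in the corresponding dual piece
  have hstar : ∀ j : Fin s, ∀ v ∈ I j, v ∈ pieceN A I j := by
    intro j v hv i m hm
    have hvV : v ∈ Vert (pol A) := hIsub j hv
    have h1 : -(ind (I i) v) ≤ (inner ℝ m v : ℝ) := hm v hvV
    by_cases hij : i = j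
    · rw [if_pos hij]
      have := ind_le_one (I i) v
      linarith
    · have hvi : v ∉ I i := fun hvi => hij (huniq v hvV i j hvi hv)
      rw [if_neg hij]
      rw [ind_of_not_mem hvi] at h1
      simpa using h1
  -- Part 2 of the theorem (purely combinatorial)
  have hpart2 : ∀ i : Fin s, pieceD A (I i) =
      {m | ∀ j : Fin s, ∀ y ∈ pieceN A I j,
        -(if i = j then (1:ℝ) else 0) ≤ (inner ℝ y m : ℝ)} := by
    intro i
    ext m
    constructor
    · intro hm j y hy
      have := hy i m hm
      rw [real_inner_comm m y]
      exact this
    · intro hm v hv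
      obtain ⟨j, hj, _⟩ := hIpart v hv
      have h1 := hm j v (hstar j v hj)
      rw [real_inner_comm v m]
      by_cases hvi : v ∈ I i
      · have hij : i = j := huniq v hv i j hvi hj
        rw [if_pos hij] at h1
        rw [ind_of_mem hvi]
        exact h1
      · have hij : i ≠ j := fun h => hvi (h ▸ hj)
        rw [if_neg hij] at h1
        rw [ind_of_not_mem hvi]
        exact h1
  -- Degenerate case s = 0 is impossible
  rcases Nat.eq_zero_or_pos s with hs0 | hspos
  · exfalso
    have hA0 : A = {(0 : E d)} := by
      rw [← hsum]
      have : (Finset.univ : Finset (Fin s)) = ∅ := by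
        rw [Finset.univ_eq_empty_iff]
        rw [hs0]
        infer_instance
      rw [this, Finset.sum_empty]
      rfl
    rw [hA0] at hint
    obtain ⟨ε, hεpos, hball⟩ := Metric.mem_nhds_iff.mp (mem_interior_iff_mem_nhds.mp hint)
    have hsub : ∀ x : E d, x = 0 := by
      intro x
      by_cases hx : x = 0
      · exact hx
      · exfalso
        have hn : 0 < ‖x‖ := norm_pos_iff.mpr hx
        obtain ⟨hmem, -⟩ := unit_smul_facts hx hεpos
        have := hball hmem
        rw [Set.mem_singleton_iff] at this
        rcases smul_eq_zero.mp this with h | h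
        · have : (0:ℝ) < ε / 2 := by positivity
          simp [h] at this  -- h : ε/2 = 0
        · rcases smul_eq_zero.mp h with h' | h'
          · exact absurd h' (by positivity)
          · exact hx h'
    have h0V : (0 : E d) ∈ Vert (pol A) := by
      refine ⟨?_, ?_⟩
      · intro x hx
        rw [hA0, Set.mem_singleton_iff] at hx
        rw [hx, inner_zero_left]
        norm_num
      · intro x1 _ x2 _ _
        exact hsub x1
    obtain ⟨i, _, _⟩ := hIpart 0 h0V
    rw [hs0] at i
    exact i.elim0
  -- Main case: s ≥ 1
  obtain ⟨F₀, hAF⟩ := hpoly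
  have hAconv : Convex ℝ A := hAF ▸ convex_convexHull ℝ _
  have hAcomp : IsCompact A := hAF ▸ F₀.finite_toSet.isCompact_convexHull ℝ
  obtain ⟨ε, hεpos, hball⟩ : ∃ ε > 0, Metric.ball (0 : E d) ε ⊆ A :=
    Metric.mem_nhds_iff.mp (mem_interior_iff_mem_nhds.mp hint)
  obtain ⟨R, hRpos, hRA⟩ : ∃ R > 0, ∀ x ∈ A, ‖x‖ ≤ R := by
    obtain ⟨R, hR⟩ := isBounded_iff_forall_norm_le.mp hAcomp.isBounded
    exact ⟨max R 1, lt_max_of_lt_right one_pos, fun x hx => (hR x hx).trans (le_max_left _ _)⟩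
  -- the polar of A as an H-polyhedron
  have hpolA_alt : pol A = {y : E d | ∀ c ∈ F₀, (-1:ℝ) ≤ (inner ℝ y c : ℝ)} := by
    rw [hAF, pol_convexHull]
    ext y
    constructor
    · intro h c hc
      rw [← real_inner_comm y c]
      exact h c hc
    · intro h c hc
      rw [real_inner_comm y c]
      exact h c hc
  have hVfin : (Vert (pol A)).Finite := by
    rw [Vert, hpolA_alt]
    exact finite_extremePoints F₀ (fun _ => (-1 : ℝ))
  have hVmem : ∀ v, v ∈ hVfin.toFinset ↔ v ∈ Vert (pol A) := fun v => hVfin.mem_toFinset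
  have hpolAcomp : IsCompact (pol A) := by
    refine Metric.isCompact_of_isClosed_isBounded (isClosed_pol A) ?_
    rw [isBounded_iff_forall_norm_le]
    exact ⟨2 / ε, fun y hy => norm_le_of_mem_pol hεpos hball hy⟩
  have hminkA : pol A = convexHull ℝ (Vert (pol A)) :=
    eq_convexHull_extremePoints hpolAcomp (convex_pol A) hVfin
  -- basic facts about the pieces Δᵢ
  have h0Q : ∀ i, (0 : E d) ∈ pieceD A (I i) := by
    intro i v _
    rw [inner_zero_left]
    have := ind_nonneg (I i) v
    linarith
  have hQconv : ∀ i, Convex ℝ (pieceD A (I i)) := by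
    intro i
    have : pieceD A (I i) = ⋂ v ∈ Vert (pol A), {m : E d | -(ind (I i) v) ≤ (inner ℝ m v : ℝ)} := by
      ext m; simp [pieceD, Set.mem_iInter]
    rw [this]
    exact convex_iInter fun v => convex_iInter fun _ => convex_halfspaceD v _
  have hQclosed : ∀ i, IsClosed (pieceD A (I i)) := by
    intro i
    have : pieceD A (I i) = ⋂ v ∈ Vert (pol A), {m : E d | -(ind (I i) v) ≤ (inner ℝ m v : ℝ)} := by
      ext m; simp [pieceD, Set.mem_iInter]
    rw [this]
    exact isClosed_biInter fun v _ =>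
      isClosed_le continuous_const (Continuous.inner continuous_id continuous_const)
  have hQA : ∀ i, pieceD A (I i) ⊆ A := by
    intro i m hm
    rw [← hsum]
    rw [Set.mem_fintype_sum]
    refine ⟨fun i' => if i' = i then m else 0, fun i' => ?_, ?_⟩
    · show (if i' = i then m else 0) ∈ pieceD A (I i')
      by_cases h : i' = i
      · rw [if_pos h, h]; exact hm
      · rw [if_neg h]; exact h0Q i'
    · simp
  have hQcomp : ∀ i, IsCompact (pieceD A (I i)) :=
    fun i => hAcomp.of_isClosed_subset (hQclosed i) (hQA i)
  have hQfinV : ∀ i, pieceD A (I i) =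
      {m : E d | ∀ v ∈ hVfin.toFinset, -(ind (I i) v) ≤ (inner ℝ m v : ℝ)} := by
    intro i
    ext m
    simp only [pieceD, Set.mem_setOf_eq]
    constructor
    · intro h v hv; exact h v ((hVmem v).mp hv)
    · intro h v hv; exact h v ((hVmem v).mpr hv)
  have hVertQfin : ∀ i, (Vert (pieceD A (I i))).Finite := by
    intro i
    rw [Vert, hQfinV i]
    exact finite_extremePoints hVfin.toFinset (fun v => -(ind (I i) v))
  have hminkQ : ∀ i, pieceD A (I i) = convexHull ℝ (Vert (pieceD A (I i))) := fun i =>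
    eq_convexHull_extremePoints (hQcomp i) (hQconv i) (hVertQfin i)
  -- basic facts about the dual pieces ∇ⱼ
  have h0N : ∀ j, (0 : E d) ∈ pieceN A I j := by
    intro j i m _
    rw [inner_zero_right]
    split_ifs <;> norm_num
  have hNconv : ∀ j, Convex ℝ (pieceN A I j) := by
    intro j
    have : pieceN A I j = ⋂ i, ⋂ m ∈ pieceD A (I i),
        {y : E d | -(if i = j then (1:ℝ) else 0) ≤ (inner ℝ m y : ℝ)} := by
      ext y; simp [pieceN, Set.mem_iInter]
    rw [this]
    exact convex_iInter fun i => convex_iInter fun m => convex_iInter fun _ =>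
      convex_halfSpace_ge
        ⟨fun a b => inner_add_right m a b, fun r a => real_inner_smul_right m a r⟩ _
  -- the two pieces intersect only in 0
  have hQQ : ∀ i j : Fin s, i ≠ j → ∀ m, m ∈ pieceD A (I i) → m ∈ pieceD A (I j) → m = 0 := by
    intro i j hij m hmi hmj
    have hpos : ∀ v ∈ Vert (pol A), (0:ℝ) ≤ (inner ℝ m v : ℝ) := by
      intro v hv
      by_cases hvi : v ∈ I i
      · have hvj : v ∉ I j := fun h => hij (huniq v hv i j hvi h)
        have := hmj v hv
        rwa [ind_of_not_mem hvj, neg_zero] at this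
      · have := hmi v hv
        rwa [ind_of_not_mem hvi, neg_zero] at this
    have hpos2 : ∀ p ∈ pol A, (0:ℝ) ≤ (inner ℝ p m : ℝ) := by
      rw [hminkA]
      apply hull_le_inner
      intro v hv
      rw [← real_inner_comm v m]
      exact hpos v hv
    by_contra hm0
    have hn : 0 < ‖m‖ := norm_pos_iff.mpr hm0
    obtain ⟨hmem, hinner⟩ := unit_smul_facts hm0 (inv_pos.mpr hRpos)
    have hpmem : -((R⁻¹ / 2) • ‖m‖⁻¹ • m) ∈ pol A := by
      apply ball_subset_pol hRpos hRA
      rwa [Metric.mem_ball, dist_zero_right, norm_neg, ← dist_zero_right, ← Metric.mem_ball]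
    have := hpos2 _ hpmem
    rw [inner_neg_left, hinner] at this
    nlinarith [inv_pos.mpr hRpos]
  -- THE KEY IDENTITY : ∇ = ∩ᵢ pol Δᵢ
  have hNab : nab A I = {y : E d | ∀ i, ∀ m ∈ pieceD A (I i), (-1:ℝ) ≤ (inner ℝ m y : ℝ)} := by
    apply Set.Subset.antisymm
    · intro y hy i m hm
      have hy' : y ∈ ∑ j, pieceN A I j := hy
      rw [Set.mem_fintype_sum] at hy'
      obtain ⟨g, hg, hgy⟩ := hy'
      rw [← hgy, inner_sum]
      have hb : ∀ j, -(if i = j then (1:ℝ) else 0) ≤ (inner ℝ m (g j) : ℝ) :=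
        fun j => hg j i m hm
      have h1 : ∑ j : Fin s, -(if i = j then (1:ℝ) else 0) = -1 := by simp
      calc (-1:ℝ) = ∑ j : Fin s, -(if i = j then (1:ℝ) else 0) := h1.symm
        _ ≤ ∑ j, (inner ℝ m (g j) : ℝ) := Finset.sum_le_sum fun j _ => hb j
    · intro y hy
      have hmin : ∀ j, ∃ mj, mj ∈ pieceD A (I j) ∧
          ∀ m ∈ pieceD A (I j), (inner ℝ mj y : ℝ) ≤ (inner ℝ m y : ℝ) := by
        intro j
        have hcont : Continuous fun m : E d => (inner ℝ m y : ℝ) :=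
          Continuous.inner continuous_id continuous_const
        obtain ⟨mj, hmj, hminOn⟩ := (hQcomp j).exists_isMinOn ⟨0, h0Q j⟩ hcont.continuousOn
        exact ⟨mj, hmj, fun m hm => hminOn hm⟩
      choose m_ hm_mem hm_min using hmin
      have ht0 : ∀ j, 0 ≤ -(inner ℝ (m_ j) y : ℝ) := by
        intro j
        have := hm_min j 0 (h0Q j)
        rw [inner_zero_left] at this
        linarith
      have ht1 : ∀ j, -(inner ℝ (m_ j) y : ℝ) ≤ 1 := by
        intro j
        have := hy j (m_ j) (hm_mem j)
        linarith
      set r : ℝ := ∑ j, -(inner ℝ (m_ j) y : ℝ) with hr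
      have hrA : ∀ m ∈ A, -r ≤ (inner ℝ m y : ℝ) := by
        intro m hm
        rw [← hsum, Set.mem_fintype_sum] at hm
        obtain ⟨g, hg, hgm⟩ := hm
        rw [← hgm, sum_inner]
        have h2 : -r = ∑ j, (inner ℝ (m_ j) y : ℝ) := by
          rw [hr]
          simp
        rw [h2]
        exact Finset.sum_le_sum fun j _ => hm_min j (g j) (hg j)
      have hr0 : 0 ≤ r := Finset.sum_nonneg fun j _ => ht0 j
      rcases eq_or_lt_of_le hr0 with hrz | hrpos
      · -- r = 0 forces y = 0
        have hy0 : y = 0 := by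
          by_contra hy0
          obtain ⟨hmemb, hinner⟩ := unit_smul_facts hy0 hεpos
          have hmemA : -((ε / 2) • ‖y‖⁻¹ • y) ∈ A := by
            apply hball
            rwa [Metric.mem_ball, dist_zero_right, norm_neg, ← dist_zero_right, ← Metric.mem_ball]
          have := hrA _ hmemA
          rw [inner_neg_left, hinner, ← hrz] at this
          have hn : 0 < ‖y‖ := norm_pos_iff.mpr hy0
          nlinarith
        show y ∈ ∑ j, pieceN A I j
        rw [Set.mem_fintype_sum]
        exact ⟨fun _ => 0, fun j => h0N j, by rw [hy0]; simp⟩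
      · -- r > 0 : decompose y
        have hppol : r⁻¹ • y ∈ pol A := by
          intro x hx
          rw [real_inner_smul_right]
          have h1 : -r ≤ (inner ℝ x y : ℝ) := hrA x hx
          have h2 := mul_le_mul_of_nonneg_left h1 (le_of_lt (inv_pos.mpr hrpos))
          rw [mul_neg, inv_mul_cancel₀ (ne_of_gt hrpos)] at h2
          linarith
        rw [hminkA, convexHull_eq] at hppol
        obtain ⟨ι, T, w, z, hw0, hw1, hzV, hcm⟩ := hppol
        rw [Finset.centerMass_eq_of_sum_1 _ _ hw1] at hcm
        set c : ι → Fin s := fun k => if h : ∃ j, z k ∈ I j then h.choose else ⟨0, hspos⟩ with hc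
        have hcmem : ∀ k ∈ T, z k ∈ I (c k) := by
          intro k hk
          obtain ⟨j, hj, -⟩ := hIpart (z k) (hzV k hk)
          have hex : ∃ j, z k ∈ I j := ⟨j, hj⟩
          rw [hc]
          simp only [dif_pos hex]
          exact hex.choose_spec
        have hcuniq : ∀ k ∈ T, ∀ j, z k ∈ I j → c k = j := fun k hk j hj =>
          huniq (z k) (hzV k hk) (c k) j (hcmem k hk) hj
        have hindc : ∀ k ∈ T, ∀ j, ind (I j) (z k) = if c k = j then (1:ℝ) else 0 := by
          intro k hk j
          by_cases h : c k = j
          · rw [if_pos h, ind_of_mem (h ▸ hcmem k hk)]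
          · rw [if_neg h, ind_of_not_mem (fun hm => h (hcuniq k hk j hm))]
        have hsum_y : ∑ j, (r • ∑ k ∈ T.filter (fun k => c k = j), w k • z k) = y := by
          rw [← Finset.smul_sum, Finset.sum_fiberwise, hcm, smul_inv_smul₀ (ne_of_gt hrpos)]
        -- the fiber weights equal the t j
        have hle : ∀ j ∈ (Finset.univ : Finset (Fin s)),
            -(inner ℝ (m_ j) y : ℝ) ≤ r * ∑ k ∈ T.filter (fun k => c k = j), w k := by
          intro j _
          have hinner1 : (inner ℝ (m_ j) y : ℝ) = r * ∑ k ∈ T, w k * (inner ℝ (m_ j) (z k) : ℝ) := by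
            have : y = r • (r⁻¹ • y) := (smul_inv_smul₀ (ne_of_gt hrpos) y).symm
            rw [this, ← hcm, real_inner_smul_right, inner_sum]
            congr 1
            exact Finset.sum_congr rfl fun k _ => real_inner_smul_right _ _ _
          have hlow : ∀ k ∈ T, w k * (-(ind (I j) (z k))) ≤ w k * (inner ℝ (m_ j) (z k) : ℝ) := by
            intro k hk
            apply mul_le_mul_of_nonneg_left _ (hw0 k hk)
            exact hm_mem j (z k) (hzV k hk)
          have hsumlow : ∑ k ∈ T, w k * (-(ind (I j) (z k))) =
              -(∑ k ∈ T.filter (fun k => c k = j), w k) := by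
            rw [Finset.sum_filter, ← Finset.sum_neg_distrib]
            apply Finset.sum_congr rfl
            intro k hk
            rw [hindc k hk j]
            by_cases h : c k = j <;> simp [h]
          have : -(∑ k ∈ T.filter (fun k => c k = j), w k) ≤
              ∑ k ∈ T, w k * (inner ℝ (m_ j) (z k) : ℝ) := by
            rw [← hsumlow]
            exact Finset.sum_le_sum hlow
          have hrmul := mul_le_mul_of_nonneg_left this (le_of_lt hrpos)
          rw [mul_neg] at hrmul
          rw [hinner1]
          linarith
        have hsums : ∑ j, (r * ∑ k ∈ T.filter (fun k => c k = j), w k) =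
            ∑ j, -(inner ℝ (m_ j) y : ℝ) := by
          rw [← Finset.mul_sum, Finset.sum_fiberwise, hw1, mul_one, ← hr]
        have heqt : ∀ j, r * ∑ k ∈ T.filter (fun k => c k = j), w k = -(inner ℝ (m_ j) y : ℝ) :=
          fun j => ((Finset.sum_eq_sum_iff_of_le hle).mp hsums.symm j (Finset.mem_univ j)).symm
        -- each fiber piece lies in ∇ⱼ
        have hyN : ∀ j, (r • ∑ k ∈ T.filter (fun k => c k = j), w k • z k) ∈ pieceN A I j := by
          intro j
          set σ : ℝ := ∑ k ∈ T.filter (fun k => c k = j), w k with hσ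
          have hσ0 : 0 ≤ σ :=
            Finset.sum_nonneg fun k hk => hw0 k (Finset.mem_of_mem_filter k hk)
          rcases eq_or_lt_of_le hσ0 with hσz | hσpos
          · have hwz : ∀ k ∈ T.filter (fun k => c k = j), w k = 0 := by
              intro k hk
              exact (Finset.sum_eq_zero_iff_of_nonneg
                (fun k hk => hw0 k (Finset.mem_of_mem_filter k hk))).mp hσz.symm k hk
            have : (r • ∑ k ∈ T.filter (fun k => c k = j), w k • z k) = 0 := by
              rw [Finset.sum_congr rfl (fun k hk => by rw [hwz k hk, zero_smul])]
              simp
            rw [this]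
            exact h0N j
          · have hq : (T.filter (fun k => c k = j)).centerMass w z ∈ convexHull ℝ (I j) := by
              apply Finset.centerMass_mem_convexHull
              · intro k hk; exact hw0 k (Finset.mem_of_mem_filter k hk)
              · rw [← hσ]; exact hσpos
              · intro k hk
                have h1 := hcmem k (Finset.mem_of_mem_filter k hk)
                have h2 : c k = j := by
                  have := Finset.mem_filter.mp hk
                  exact this.2
                rw [h2] at h1
                exact h1
            have hqN : (T.filter (fun k => c k = j)).centerMass w z ∈ pieceN A I j :=
              convexHull_min (fun v hv => hstar j v hv) (hNconv j) hq
            have hcm2 : (r • ∑ k ∈ T.filter (fun k => c k = j), w k • z k) =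
                (r * σ) • ((T.filter (fun k => c k = j)).centerMass w z) := by
              rw [Finset.centerMass, ← hσ, smul_smul, mul_assoc,
                mul_inv_cancel₀ (ne_of_gt hσpos), mul_one]
            have htj : r * σ = -(inner ℝ (m_ j) y : ℝ) := heqt j
            have htle : r * σ ≤ 1 := htj ▸ ht1 j
            have htge : 0 ≤ r * σ := le_of_lt (mul_pos hrpos hσpos)
            have := (hNconv j) hqN (h0N j) htge (by linarith : (0:ℝ) ≤ 1 - r * σ) (by ring)
            rw [smul_zero, add_zero] at this
            rw [hcm2]
            exact this
        show y ∈ ∑ j, pieceN A I j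
        rw [Set.mem_fintype_sum]
        exact ⟨fun j => r • ∑ k ∈ T.filter (fun k => c k = j), w k • z k,
          fun j => hyN j, hsum_y⟩
  -- the set C = conv(∪ Δᵢ)
  have hGfin : (⋃ i, Vert (pieceD A (I i))).Finite := Set.finite_iUnion hVertQfin
  set C : Set (E d) := convexHull ℝ (⋃ i, pieceD A (I i)) with hC
  have hCconv : Convex ℝ C := convex_convexHull ℝ _
  have hCA : C ⊆ A := convexHull_min (Set.iUnion_subset hQA) hAconv
  have h0C : (0 : E d) ∈ C :=
    subset_convexHull ℝ _ (Set.mem_iUnion.mpr ⟨⟨0, hspos⟩, h0Q ⟨0, hspos⟩⟩)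
  have hC_alt : C = convexHull ℝ (⋃ i, Vert (pieceD A (I i))) := by
    apply Set.Subset.antisymm
    · apply convexHull_min _ (convex_convexHull ℝ _)
      apply Set.iUnion_subset
      intro i m hm
      rw [hminkQ i] at hm
      exact convexHull_mono (Set.subset_iUnion _ i) hm
    · apply convexHull_min _ hCconv
      apply Set.iUnion_subset
      intro i v hv
      exact subset_convexHull ℝ _ (Set.mem_iUnion.mpr ⟨i, extremePoints_subset hv⟩)
  have hCcomp : IsCompact C := by
    rw [hC_alt]
    exact hGfin.isCompact_convexHull ℝ
  have hpolC : pol C = nab A I := by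
    rw [hC, pol_convexHull, hNab]
    ext y
    simp only [pol, Set.mem_setOf_eq, Set.mem_iUnion]
    constructor
    · intro h i m hm
      exact h m ⟨i, hm⟩
    · rintro h m ⟨i, hm⟩
      exact h i m hm
  have hnab_conv : Convex ℝ (nab A I) := hpolC ▸ convex_pol C
  have hnab_int : (0 : E d) ∈ interior (nab A I) := by
    have hsub : Metric.ball (0 : E d) R⁻¹ ⊆ nab A I := by
      rw [← hpolC]
      exact ball_subset_pol hRpos (fun x hx => hRA x (hCA hx))
    exact mem_interior.mpr ⟨_, hsub, Metric.isOpen_ball, Metric.mem_ball_self (inv_pos.mpr hRpos)⟩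
  have hballC : Metric.ball (0 : E d) (ε / s) ⊆ C := by
    intro x hx
    rw [Metric.mem_ball, dist_zero_right] at hx
    have hsx : (s : ℝ) • x ∈ A := by
      apply hball
      rw [Metric.mem_ball, dist_zero_right, norm_smul, Real.norm_natCast]
      calc (s:ℝ) * ‖x‖ < (s:ℝ) * (ε / s) :=
            mul_lt_mul_of_pos_left hx (by exact_mod_cast hspos)
        _ = ε := by field_simp
    rw [← hsum, Set.mem_fintype_sum] at hsx
    obtain ⟨g, hg, hgx⟩ := hsx
    have hxe : x = ∑ i, (s:ℝ)⁻¹ • g i := by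
      rw [← Finset.smul_sum, hgx, smul_smul,
        inv_mul_cancel₀ (by exact_mod_cast (ne_of_gt hspos) : (s:ℝ) ≠ 0), one_smul]
    rw [hxe]
    apply hCconv.sum_mem
    · intro i _; positivity
    · rw [Finset.sum_const, Finset.card_univ, Fintype.card_fin, nsmul_eq_mul,
        mul_inv_cancel₀ (by exact_mod_cast (ne_of_gt hspos) : (s:ℝ) ≠ 0)]
    · intro i _
      exact subset_convexHull ℝ _ (Set.mem_iUnion.mpr ⟨i, hg i⟩)
  have hnab_comp : IsCompact (nab A I) := by
    refine Metric.isCompact_of_isClosed_isBounded (hpolC ▸ isClosed_pol C) ?_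
    rw [isBounded_iff_forall_norm_le]
    refine ⟨2 / (ε / s), fun y hy => ?_⟩
    have hy' : y ∈ pol C := hpolC ▸ hy
    exact norm_le_of_mem_pol (by positivity) hballC hy'
  have hpolnab : pol (nab A I) = C := by
    rw [← hpolC, pol_pol hCcomp.isClosed hCconv h0C]
  -- finitely many vertices of ∇, so ∇ is a polytope
  have hnab_alt : nab A I = {y : E d | ∀ c ∈ hGfin.toFinset, (-1:ℝ) ≤ (inner ℝ y c : ℝ)} := by
    rw [hNab]
    ext y
    simp only [Set.mem_setOf_eq, Set.Finite.mem_toFinset, Set.mem_iUnion]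
    constructor
    · rintro h c ⟨i, hc⟩
      have := h i c (extremePoints_subset hc)
      rwa [real_inner_comm y c] at this
    · intro h i m hm
      rw [hminkQ i] at hm
      refine hull_le_inner ?_ m hm
      intro v hv
      have := h v ⟨i, hv⟩
      rwa [real_inner_comm v y] at this
  have hnabVfin : (Vert (nab A I)).Finite := by
    rw [Vert, hnab_alt]
    exact finite_extremePoints hGfin.toFinset (fun _ => (-1:ℝ))
  have hnab_mink : nab A I = convexHull ℝ (Vert (nab A I)) :=
    eq_convexHull_extremePoints hnab_comp hnab_conv hnabVfin
  have hnab_poly : IsPolytope (nab A I) :=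
    ⟨hnabVfin.toFinset, by rw [hnabVfin.coe_toFinset]; exact hnab_mink⟩
  -- the index assignment for vertices of C
  set pick : E d → Fin s :=
    fun w => if h : ∃ i, w ∈ pieceD A (I i) then h.choose else ⟨0, hspos⟩ with hpick
  have hpickQ : ∀ w, (∃ i, w ∈ pieceD A (I i)) → w ∈ pieceD A (I (pick w)) := by
    intro w hw
    rw [hpick]
    simp only [dif_pos hw]
    exact hw.choose_spec
  have hpick_uniq : ∀ w, w ≠ 0 → ∀ i, w ∈ pieceD A (I i) → pick w = i := by
    intro w hw0 i hwi
    have h1 := hpickQ w ⟨i, hwi⟩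
    by_contra hne
    exact hw0 (hQQ _ _ hne w h1 hwi)
  -- nonzero vertices of Δᵢ are vertices of C
  have hVertQW : ∀ i, ∀ u, u ∈ Vert (pieceD A (I i)) → u ≠ 0 →
      u ∈ Set.extremePoints ℝ C := by
    intro i u hu hu0
    obtain ⟨vstar, hvV, hvIi, hvtight⟩ :
        ∃ v, v ∈ Vert (pol A) ∧ v ∈ I i ∧ (inner ℝ u v : ℝ) = -1 := by
      by_contra hcon
      push_neg at hcon
      have hext : u ∈ Set.extremePoints ℝ
          {m : E d | ∀ v ∈ hVfin.toFinset, -(ind (I i) v) ≤ (inner ℝ m v : ℝ)} := by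
        rw [← hQfinV i]
        exact hu
      have h2u : (2:ℝ) • u = u := by
        apply eq_of_tight hVfin.toFinset (fun v => -(ind (I i) v)) hext
        intro v hv htv
        have hvIi : v ∉ I i := by
          intro hmem
          exact hcon v ((hVmem v).mp hv) hmem (by rw [htv, ind_of_mem hmem])
        rw [ind_of_not_mem hvIi, neg_zero] at htv ⊢
        rw [real_inner_smul_left, htv, mul_zero]
      have : u = 0 := by
        have h3 := congrArg (fun w : E d => w - u) h2u
        simpa [two_smul] using h3
      exact hu0 this
    refine ⟨subset_convexHull ℝ _ (Set.mem_iUnion.mpr ⟨i, extremePoints_subset hu⟩), ?_⟩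
    intro x1 hx1 x2 hx2 hseg
    have hCge : ∀ x ∈ C, (-1:ℝ) ≤ (inner ℝ x vstar : ℝ) := by
      rw [hC]
      apply hull_le_inner
      intro q hq
      rw [Set.mem_iUnion] at hq
      obtain ⟨i', hq⟩ := hq
      have h1 := hq vstar hvV
      have h2 : ind (I i') vstar ≤ 1 := ind_le_one _ _
      linarith
    have hFQ : ∀ x ∈ C, (inner ℝ x vstar : ℝ) = -1 → x ∈ pieceD A (I i) := by
      intro x hx hxv
      rw [hC, convexHull_eq] at hx
      obtain ⟨ι, T, w, z, hw0, hw1, hzm, hcm⟩ := hx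
      rw [Finset.centerMass_eq_of_sum_1 _ _ hw1] at hcm
      have hzb : ∀ k ∈ T, (-1:ℝ) ≤ (inner ℝ (z k) vstar : ℝ) := by
        intro k hk
        exact hCge (z k) (subset_convexHull ℝ _ (hzm k hk))
      have hsum1 : ∑ k ∈ T, w k * ((inner ℝ (z k) vstar : ℝ) + 1) = 0 := by
        have h1 : ∑ k ∈ T, w k * (inner ℝ (z k) vstar : ℝ) = -1 := by
          rw [← hxv, ← hcm, sum_inner]
          exact Finset.sum_congr rfl fun k _ => (real_inner_smul_left _ _ _).symm
        have h2 : ∑ k ∈ T, w k * ((inner ℝ (z k) vstar : ℝ) + 1) =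
            (∑ k ∈ T, w k * (inner ℝ (z k) vstar : ℝ)) + ∑ k ∈ T, w k := by
          rw [← Finset.sum_add_distrib]
          exact Finset.sum_congr rfl fun k _ => by ring
        rw [h2, h1, hw1]
        ring
      have hzero : ∀ k ∈ T, w k * ((inner ℝ (z k) vstar : ℝ) + 1) = 0 :=
        (Finset.sum_eq_zero_iff_of_nonneg
          (fun k hk => mul_nonneg (hw0 k hk) (by linarith [hzb k hk]))).mp hsum1
      have hkey : ∀ k ∈ T, w k ≠ 0 → z k ∈ pieceD A (I i) := by
        intro k hk hwk
        have hz1 : (inner ℝ (z k) vstar : ℝ) = -1 := by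
          rcases mul_eq_zero.mp (hzero k hk) with h | h
          · exact absurd h hwk
          · linarith
        obtain ⟨i', hzi'⟩ := Set.mem_iUnion.mp (hzm k hk)
        by_cases hii : i' = i
        · rw [hii] at hzi'
          exact hzi'
        · exfalso
          have hvnot : vstar ∉ I i' := fun hmem => hii (huniq vstar hvV i' i hmem hvIi)
          have h3 := hzi' vstar hvV
          rw [ind_of_not_mem hvnot, neg_zero] at h3
          linarith
      rw [← hcm]
      have hx' : ∑ k ∈ T, w k • z k = ∑ k ∈ T.filter (fun k => w k ≠ 0), w k • z k := by
        symm
        apply Finset.sum_filter_of_ne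
        intro k _ h hw
        exact h (by rw [hw, zero_smul])
      rw [hx']
      apply (hQconv i).sum_mem
      · intro k hk
        exact hw0 k (Finset.mem_of_mem_filter k hk)
      · rw [Finset.sum_filter_ne_zero, hw1]
      · intro k hk
        obtain ⟨hkT, hwk⟩ := Finset.mem_filter.mp hk
        exact hkey k hkT hwk
    obtain ⟨a, b, ha, hb, hab, habu⟩ := hseg
    have hv1 : (-1:ℝ) ≤ (inner ℝ x1 vstar : ℝ) := hCge x1 hx1
    have hv2 : (-1:ℝ) ≤ (inner ℝ x2 vstar : ℝ) := hCge x2 hx2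
    have hcomb : a * (inner ℝ x1 vstar : ℝ) + b * (inner ℝ x2 vstar : ℝ) = -1 := by
      rw [← hvtight, ← habu, inner_add_left, real_inner_smul_left, real_inner_smul_left]
    have hsum0 : a * ((inner ℝ x1 vstar : ℝ) + 1) + b * ((inner ℝ x2 vstar : ℝ) + 1) = 0 := by
      linear_combination hcomb + hab
    have hA0 : a * ((inner ℝ x1 vstar : ℝ) + 1) = 0 := by
      have n1 : 0 ≤ a * ((inner ℝ x1 vstar : ℝ) + 1) := mul_nonneg ha.le (by linarith)
      have n2 : 0 ≤ b * ((inner ℝ x2 vstar : ℝ) + 1) := mul_nonneg hb.le (by linarith)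
      linarith
    have hB0 : b * ((inner ℝ x2 vstar : ℝ) + 1) = 0 := by linarith
    have he1 : (inner ℝ x1 vstar : ℝ) = -1 := by
      rcases mul_eq_zero.mp hA0 with h | h
      · exact absurd h (ne_of_gt ha)
      · linarith
    have he2 : (inner ℝ x2 vstar : ℝ) = -1 := by
      rcases mul_eq_zero.mp hB0 with h | h
      · exact absurd h (ne_of_gt hb)
      · linarith
    exact hu.2 (hFQ x1 hx1 he1) (hFQ x2 hx2 he2) ⟨a, b, ha, hb, hab, habu⟩
  -- the dual partition J
  set J : Fin s → Set (E d) :=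
    fun j => {w | w ∈ Vert (pol (nab A I)) ∧ pick w = j} with hJ
  have hJsub : ∀ j, J j ⊆ Vert (pol (nab A I)) := fun j w hw => hw.1
  have hJpart : ∀ w ∈ Vert (pol (nab A I)), ∃! j, w ∈ J j := by
    intro w hw
    exact ⟨pick w, ⟨hw, rfl⟩, fun j hj => hj.2.symm⟩
  have hWQ : ∀ w ∈ Vert (pol (nab A I)), w ∈ pieceD A (I (pick w)) := by
    intro w hw
    have h1 : w ∈ Set.extremePoints ℝ C := by rw [hpolnab] at hw; exact hw
    have h2 : w ∈ ⋃ i, pieceD A (I i) := by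
      rw [hC] at h1
      exact extremePoints_convexHull_subset h1
    exact hpickQ w (Set.mem_iUnion.mp h2)
  have hpieceJ : ∀ j, pieceD (nab A I) (J j) = pieceN A I j := by
    intro j
    apply Set.Subset.antisymm
    · intro y hy i m hm
      rw [hminkQ i] at hm
      refine hull_le_inner ?_ m hm
      intro v hv
      rcases eq_or_ne v 0 with rfl | hv0
      · rw [inner_zero_left]
        split_ifs <;> norm_num
      · have hvW : v ∈ Set.extremePoints ℝ C := hVertQW i v hv hv0
        have hvW' : v ∈ Vert (pol (nab A I)) := by rw [hpolnab]; exact hvW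
        have hpv : pick v = i := hpick_uniq v hv0 i (extremePoints_subset hv)
        have h1 := hy v hvW'
        rw [real_inner_comm v y] at h1
        have hind : ind (J j) v = if i = j then (1:ℝ) else 0 := by
          by_cases hij : i = j
          · rw [if_pos hij, ind_of_mem (show v ∈ J j from ⟨hvW', by rw [hpv, hij]⟩)]
          · rw [if_neg hij, ind_of_not_mem (show v ∉ J j from fun hmem => hij (by rw [← hpv, hmem.2]))]
        rw [hind] at h1
        exact h1
    · intro y hy v hv
      have hvQ := hWQ v hv
      have h1 := hy (pick v) v hvQ
      have hind : ind (J j) v = if pick v = j then (1:ℝ) else 0 := by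
        by_cases h : pick v = j
        · rw [if_pos h, ind_of_mem (show v ∈ J j from ⟨hv, h⟩)]
        · rw [if_neg h, ind_of_not_mem (show v ∉ J j from fun hmem => h hmem.2)]
      rw [hind, real_inner_comm v y]
      exact h1
  refine ⟨⟨J, ⟨hnab_poly, hnab_int, ⟨hJsub, hJpart⟩, ?_⟩, hpieceJ⟩, hpart2⟩
  calc ∑ j, pieceD (nab A I) (J j) = ∑ j, pieceN A I j :=
        Finset.sum_congr rfl fun j _ => hpieceJ j
    _ = nab A I := rfl


end GNPPaper
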